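/- arXiv:math/0210051 — 2 statements merged into one kernel-verified Lean document; each statement's English description precedes it below -/
import Mathlib

section
/- Let R,S be infinitesimally-close points of a generic configuration P, and let T be any other point of P distinct from R,S,P,Q. If the line through R and T separates two points P,Q ∈ P∖{R,S}, then the line through S and T also separates P and Q. -/
open scoped Classical

noncomputable section

/-- Orientation determinant of two vectors in the plane. -/
def det2 (u v : ℝ × ℝ) : ℝ := u.1 * v.2 - u.2 * v.1

/-- The line through `A` and `B` separates the points `P` and `Q`
(they lie in distinct open half-planes determined by the line). -/
def SepLine (A B P Q : ℝ × ℝ) : Prop :=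
  det2 (B - A) (P - A) * det2 (B - A) (Q - A) < 0

/-- A finite planar point set is a generic configuration if no three of its
points are collinear. -/
def Generic (C : Finset (ℝ × ℝ)) : Prop :=
  ∀ a ∈ C, ∀ b ∈ C, ∀ c ∈ C, a ≠ b → a ≠ c → b ≠ c →
    ¬ Collinear ℝ ({a, b, c} : Set (ℝ × ℝ))

/-- `nsep C P Q` is the number of lines spanned by (unordered) pairs of points of
`C \ {P,Q}` that separate `P` from `Q`. -/
def nsep (C : Finset (ℝ × ℝ)) (P Q : ℝ × ℝ) : ℕ :=
  (((C \ {P, Q}).powersetCard 2).filter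
    (fun s => ∃ A ∈ s, ∃ B ∈ s, A ≠ B ∧ SepLine A B P Q)).card

/-- The Orchard relation: `P ∼ Q` iff `n(P,Q) ≡ n - 3 (mod 2)` where `n = |C|`. -/
def Orchard (C : Finset (ℝ × ℝ)) (P Q : ℝ × ℝ) : Prop :=
  (nsep C P Q : ℤ) ≡ (C.card : ℤ) - 3 [ZMOD 2]

/-- A configuration is monochromatic if all its points are Orchard-equivalent. -/
def Mono (C : Finset (ℝ × ℝ)) : Prop :=
  ∀ P ∈ C, ∀ Q ∈ C, P ≠ Q → Orchard C P Q

/-- A configuration is in convex position if each of its points is a vertex of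
the convex hull. -/
def ConvexPos (C : Finset (ℝ × ℝ)) : Prop :=
  ∀ P ∈ C, P ∉ convexHull ℝ ((C : Set (ℝ × ℝ)) \ {P})

/-! The signs of the orientations of `(P, T, R)` and `(P, T, S)` agree, since the line `PT`
does not separate `R` from `S` and no three points are collinear; likewise for `Q`. As
`RT` separates `P` from `Q` exactly when the orientations of `(P, T, R)` and `(Q, T, R)`
have opposite signs, replacing `R` by `S` changes neither sign. -/

lemma exists_smul_eq_of_det2_eq_zero {u v : ℝ × ℝ} (hu : u ≠ 0) (h : det2 u v = 0) :
    ∃ r : ℝ, r • u = v := by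
  unfold det2 at h
  by_cases h1 : u.1 = 0
  · have h2 : u.2 ≠ 0 := fun h2 => hu (Prod.ext h1 h2)
    refine ⟨v.2 / u.2, Prod.ext ?_ ?_⟩
    · have : u.2 * v.1 = 0 := by rw [h1] at h; linarith
      simp [h1, (mul_eq_zero.mp this).resolve_left h2]
    · simp [h2]
  · refine ⟨v.1 / u.1, Prod.ext ?_ ?_⟩
    · simp [h1]
    · simp only [Prod.smul_snd, smul_eq_mul]
      field_simp
      linarith

lemma collinear_of_det2_eq_zero {a b c : ℝ × ℝ} (hab : a ≠ b) (h : det2 (b - a) (c - a) = 0) :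
    Collinear ℝ ({a, b, c} : Set (ℝ × ℝ)) := by
  obtain ⟨r, hr⟩ := exists_smul_eq_of_det2_eq_zero (sub_ne_zero.mpr hab.symm) h
  rw [collinear_iff_of_mem (Set.mem_insert a _)]
  refine ⟨b - a, ?_⟩
  rintro p (rfl | rfl | rfl)
  · exact ⟨0, by simp⟩
  · exact ⟨1, by simp⟩
  · exact ⟨r, by rw [hr, vadd_eq_add, sub_add_cancel]⟩

lemma Generic.det2_ne_zero {C : Finset (ℝ × ℝ)} (hC : Generic C) {a b c : ℝ × ℝ}
    (ha : a ∈ C) (hb : b ∈ C) (hc : c ∈ C) (hab : a ≠ b) (hac : a ≠ c) (hbc : b ≠ c) :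
    det2 (b - a) (c - a) ≠ 0 :=
  fun h => hC a ha b hb c hc hab hac hbc (collinear_of_det2_eq_zero hab h)

lemma not_sepLine_of_nsep_eq_zero {C : Finset (ℝ × ℝ)} {R S A B : ℝ × ℝ}
    (h : nsep C R S = 0) (hA : A ∈ C \ {R, S}) (hB : B ∈ C \ {R, S}) (hAB : A ≠ B) :
    ¬ SepLine A B R S := by
  have hpair : {A, B} ∈ (C \ {R, S}).powersetCard 2 := by
    rw [Finset.mem_powersetCard, Finset.card_pair hAB]
    exact ⟨Finset.insert_subset hA (Finset.singleton_subset_iff.mpr hB), rfl⟩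
  intro hsep
  exact Finset.filter_eq_empty_iff.mp (Finset.card_eq_zero.mp h) hpair
    ⟨A, by simp, B, by simp, hAB, hsep⟩

lemma Generic.det2_mul_pos_of_nsep_eq_zero {C : Finset (ℝ × ℝ)} (hC : Generic C)
    {R S A B : ℝ × ℝ} (hclose : nsep C R S = 0) (hR : R ∈ C) (hS : S ∈ C)
    (hA : A ∈ C) (hB : B ∈ C) (hAR : A ≠ R) (hAS : A ≠ S) (hBR : B ≠ R) (hBS : B ≠ S)
    (hAB : A ≠ B) :
    0 < det2 (B - A) (R - A) * det2 (B - A) (S - A) := by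
  have hnsep : ¬ SepLine A B R S :=
    not_sepLine_of_nsep_eq_zero hclose (by simp [hA, hAR, hAS]) (by simp [hB, hBR, hBS]) hAB
  rw [SepLine, not_lt] at hnsep
  exact hnsep.lt_of_ne (mul_ne_zero (hC.det2_ne_zero hA hB hR hAB hAR hBR)
    (hC.det2_ne_zero hA hB hS hAB hAS hBS)).symm

lemma sepLine_iff_det2_mul_neg (R T P Q : ℝ × ℝ) :
    SepLine R T P Q ↔ det2 (T - P) (R - P) * det2 (T - Q) (R - Q) < 0 := by
  unfold SepLine
  convert Iff.rfl using 2
  simp only [det2, Prod.fst_sub, Prod.snd_sub]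
  ring

lemma mul_neg_of_mul_pos_of_mul_pos {α : Type*} [CommRing α] [LinearOrder α]
    [IsStrictOrderedRing α] {a a' b b' : α} (ha : 0 < a * a') (hb : 0 < b * b')
    (h : a * b < 0) : a' * b' < 0 := by
  nlinarith [mul_pos ha hb]

theorem infinitesimally_close_pairing_general (C : Finset (ℝ × ℝ)) (hC : Generic C)
    (R S : ℝ × ℝ) (hR : R ∈ C) (hS : S ∈ C)
    (hclose : nsep C R S = 0)
    (P Q T : ℝ × ℝ) (hP : P ∈ C) (hQ : Q ∈ C) (hT : T ∈ C)
    (hPout : P ≠ R ∧ P ≠ S) (hQout : Q ≠ R ∧ Q ≠ S)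
    (hTout : T ≠ R ∧ T ≠ S ∧ T ≠ P ∧ T ≠ Q)
    (hsep : SepLine R T P Q) :
    SepLine S T P Q := by
  obtain ⟨hTR, hTS, hTP, hTQ⟩ := hTout
  have hPT := hC.det2_mul_pos_of_nsep_eq_zero hclose hR hS hP hT
    hPout.1 hPout.2 hTR hTS hTP.symm
  have hQT := hC.det2_mul_pos_of_nsep_eq_zero hclose hR hS hQ hT
    hQout.1 hQout.2 hTR hTS hTQ.symm
  rw [sepLine_iff_det2_mul_neg] at hsep ⊢
  exact mul_neg_of_mul_pos_of_mul_pos hPT hQT hsep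

/-- If `R,S` are infinitesimally close and the line through `R` and some other
point `T` separates `P` from `Q`, then so does the line through `S` and `T`. -/
theorem infinitesimally_close_pairing (C : Finset (ℝ × ℝ)) (hC : Generic C)
    (R S : ℝ × ℝ) (hR : R ∈ C) (hS : S ∈ C) (hRS : R ≠ S)
    (hclose : nsep C R S = 0)
    (P Q T : ℝ × ℝ) (hP : P ∈ C) (hQ : Q ∈ C) (hT : T ∈ C) (hPQ : P ≠ Q)
    (hPout : P ≠ R ∧ P ≠ S) (hQout : Q ≠ R ∧ Q ≠ S)
    (hTout : T ≠ R ∧ T ≠ S ∧ T ≠ P ∧ T ≠ Q)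
    (hsep : SepLine R T P Q) :
    SepLine S T P Q :=
  infinitesimally_close_pairing_general C hC R S hR hS hclose P Q T hP hQ hT hPout hQout hTout hsep
end
end

section
/- Let P be a generic configuration of 2n points in convex position (vertices of a convex 2n-gon, labeled cyclically s_0,...,s_{2n−1}). Then under the Orchard relation, s_a ∼ s_b if and only if a ≡ b (mod 2); i.e., the Orchard classes are the even-indexed and odd-indexed vertices, each of size n. -/
open scoped Classical

noncomputable section

/-!
Read cyclically from `s a`, a convex polygon is sorted: every triple of vertices in index order
is counterclockwise. Local convexity at each vertex gives this by induction on the fan from a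
vertex, the inductive step being the Grassmann–Plücker relation. In a sorted polygon the chord
through `s p, s q` separates `s a` from `s b` exactly when one of `p, q` lies on each side of the
chord `s a s b`, so with `t = b - a (mod m)` there are `(t - 1) * (m - 1 - t)` separating lines.
For even `m` this count is odd, like `m - 3`, exactly when `t` is even.
-/

open Finset Fin.NatCast

def Ccw (A B C : ℝ × ℝ) : Prop := 0 < det2 (B - A) (C - A)

lemma det2_sub_rotate (A B C : ℝ × ℝ) : det2 (B - A) (C - A) = det2 (C - B) (A - B) := by
  simp only [det2, Prod.fst_sub, Prod.snd_sub]; ring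

lemma det2_sub_swap (A B C : ℝ × ℝ) : det2 (C - A) (B - A) = -det2 (B - A) (C - A) := by
  simp only [det2, Prod.fst_sub, Prod.snd_sub]; ring

lemma Ccw.rotate {A B C : ℝ × ℝ} (h : Ccw A B C) : Ccw B C A := by
  rwa [Ccw, ← det2_sub_rotate]

lemma sepLine_comm {A B P Q : ℝ × ℝ} : SepLine A B P Q ↔ SepLine B A P Q := by
  have key : det2 (A - B) (P - B) * det2 (A - B) (Q - B)
      = det2 (B - A) (P - A) * det2 (B - A) (Q - A) := by
    simp only [det2, Prod.fst_sub, Prod.snd_sub]; ring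
  rw [SepLine, SepLine, key]

lemma Ccw.trans {O A X Y Z : ℝ × ℝ} (hX : Ccw O A X) (hY : Ccw O A Y) (hZ : Ccw O A Z)
    (hXY : Ccw O X Y) (hYZ : Ccw O Y Z) : Ccw O X Z := by
  unfold Ccw at *
  have plucker : det2 (A - O) (Y - O) * det2 (X - O) (Z - O)
      = det2 (A - O) (X - O) * det2 (Y - O) (Z - O)
        + det2 (A - O) (Z - O) * det2 (X - O) (Y - O) := by
    simp only [det2, Prod.fst_sub, Prod.snd_sub]; ring
  nlinarith [mul_pos hX hYZ, mul_pos hZ hXY]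

lemma ccw_fan {v : ℕ → ℝ × ℝ} {N : ℕ}
    (hfirst : ∀ q, 2 ≤ q → q < N → Ccw (v 0) (v 1) (v q))
    (hedge : ∀ r, 1 ≤ r → r + 1 < N → Ccw (v r) (v (r + 1)) (v 0)) :
    ∀ q p, 0 < p → p < q → q < N → Ccw (v 0) (v p) (v q) := by
  intro q
  induction q using Nat.strong_induction_on with
  | _ q ih =>
    intro p hp hpq hqN
    obtain rfl | hp1 := eq_or_ne p 1
    · exact hfirst q (by omega) hqN
    obtain rfl | hpq' := eq_or_ne q (p + 1)
    · exact (hedge p hp hqN).rotate.rotate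
    obtain ⟨r, rfl⟩ : ∃ r, q = r + 1 := ⟨q - 1, by omega⟩
    exact Ccw.trans (A := v 1) (Y := v r) (hfirst p (by omega) (by omega))
      (hfirst r (by omega) (by omega)) (hfirst (r + 1) (by omega) hqN)
      (ih r (by omega) p hp (by omega) (by omega)) (hedge r (by omega) hqN).rotate.rotate

def IsConvexPolygon {m : ℕ} [NeZero m] (s : Fin m → ℝ × ℝ) : Prop :=
  ∀ i j : Fin m, j ≠ i → j ≠ i + 1 → Ccw (s i) (s (i + 1)) (s j)

def CcwSorted {ι : Type*} [LinearOrder ι] (v : ι → ℝ × ℝ) : Prop :=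
  ∀ x y z, x < y → y < z → Ccw (v x) (v y) (v z)

lemma IsConvexPolygon.ccwSorted_rotate {m : ℕ} [NeZero m] {s : Fin m → ℝ × ℝ}
    (hconv : IsConvexPolygon s) (a : Fin m) : CcwSorted fun x => s (a + x) := by
  intro x y z hxy hyz
  set i := a + x
  have hne : ∀ k l : ℕ, k < m → l < m → k ≠ l → i + (k : Fin m) ≠ i + l := by
    intro k l hk hl hkl
    rwa [Ne, add_right_inj, ← Fin.val_inj, Fin.val_cast_of_lt hk, Fin.val_cast_of_lt hl]
  have hfan := ccw_fan (v := fun k : ℕ => s (i + k)) (N := m)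
    (fun q hq hqm => by
      simpa using hconv i (i + q) (by simpa using hne q 0 hqm (by omega) (by omega))
        (by simpa using hne q 1 hqm (by omega) (by omega)))
    (fun r hr hrm => by
      simpa [add_assoc] using hconv (i + r) i
        (by simpa using hne 0 r (by omega) (by omega) (by omega))
        (by simpa [add_assoc] using hne 0 (r + 1) (by omega) hrm (by omega)))
  have hoffset : ∀ w : Fin m, a + w = i + (((w - x : Fin m) : ℕ) : Fin m) := by
    intro w; rw [Fin.cast_val_eq_self]; simp only [i]; abel
  have hy := Fin.sub_val_of_le hxy.le
  have hz := Fin.sub_val_of_le (hxy.trans hyz).le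
  simp only [hoffset y, hoffset z]
  simpa using hfan (z - x : Fin m) (y - x : Fin m) (by omega) (by omega) (Fin.is_lt _)

section Sorted

variable {ι : Type*} [LinearOrder ι] {v : ι → ℝ × ℝ}

lemma sepLine_iff_of_lt (hv : CcwSorted v) {o p q t : ι} (hop : o < p) (hpq : p < q)
    (htp : t ≠ p) (htq : t ≠ q) :
    SepLine (v p) (v q) (v o) (v t) ↔ p < t ∧ t < q := by
  have hO : 0 < det2 (v q - v p) (v o - v p) := (hv o p q hop hpq).rotate
  rw [SepLine, mul_neg_iff]
  simp only [hO, not_lt_of_gt hO, true_and, false_and, or_false]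
  rcases lt_or_gt_of_ne htp with htp | htp
  · have hT : 0 < det2 (v q - v p) (v t - v p) := (hv t p q htp hpq).rotate
    simp only [not_lt_of_gt hT, false_iff, not_and_or, not_lt]; exact Or.inl htp.le
  rcases lt_or_gt_of_ne htq with htq | htq
  · have hT : det2 (v q - v p) (v t - v p) < 0 := by
      rw [det2_sub_swap]; exact neg_neg_of_pos (hv p t q htp htq)
    simp only [hT, htp, htq, and_self]
  · have hT : 0 < det2 (v q - v p) (v t - v p) := hv p q t hpq htq
    simp only [not_lt_of_gt hT, false_iff, not_and_or, not_lt]; exact Or.inr htq.le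

lemma sepLine_iff_between (hv : CcwSorted v) {o p q t : ι} (hop : o < p) (hoq : o < q)
    (hpq : p ≠ q) (htp : t ≠ p) (htq : t ≠ q) :
    SepLine (v p) (v q) (v o) (v t) ↔ p < t ∧ t < q ∨ q < t ∧ t < p := by
  rcases lt_or_gt_of_ne hpq with h | h
  · rw [sepLine_iff_of_lt hv hop h htp htq]
    exact ⟨Or.inl, fun h' => h'.resolve_right fun h'' => (h''.1.trans h''.2).not_gt h⟩
  · rw [sepLine_comm, sepLine_iff_of_lt hv hoq h htq htp]
    exact ⟨Or.inr, fun h' => h'.resolve_left fun h'' => (h''.1.trans h''.2).not_gt h⟩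

end Sorted

lemma nsep_eq_card_mul_card {m : ℕ} [NeZero m] {v : Fin m → ℝ × ℝ}
    (hinj : Function.Injective v) (hv : CcwSorted v) {t : Fin m} (ht : 0 < t) :
    nsep (univ.image v) (v 0) (v t) = #(Ioo 0 t) * #(Ioi t) := by
  have hmem : ∀ x, v x ∈ univ.image v \ {v 0, v t} ↔ 0 < x ∧ x ≠ t := by
    intro x; simp [hinj.eq_iff, Fin.pos_iff_ne_zero]
  have hinjOn : Set.InjOn (fun xy : Fin m × Fin m => ({v xy.1, v xy.2} : Finset (ℝ × ℝ)))
      ↑(Ioo 0 t ×ˢ Ioi t) := by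
    rintro ⟨x, y⟩ hxy ⟨x', y'⟩ hxy' h
    simp only [coe_product, Set.mem_prod, coe_Ioo, coe_Ioi, Set.mem_Ioo, Set.mem_Ioi] at hxy hxy'
    simp only at h
    have hx : v x ∈ ({v x', v y'} : Finset _) := h ▸ mem_insert_self _ _
    have hy : v y ∈ ({v x', v y'} : Finset _) := h ▸ mem_insert_of_mem (mem_singleton_self _)
    simp only [mem_insert, mem_singleton, hinj.eq_iff] at hx hy
    grind
  rw [nsep, ← card_product, ← card_image_of_injOn hinjOn]
  congr 1
  ext e
  simp only [mem_filter, mem_powersetCard, mem_image, mem_product, mem_Ioo, mem_Ioi]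
  constructor
  · rintro ⟨⟨hsub, hcard⟩, A, hA, B, hB, hAB, hsep⟩
    have he : {A, B} = e :=
      eq_of_subset_of_card_le (insert_subset hA (singleton_subset_iff.2 hB))
        (by rw [hcard, card_pair hAB])
    obtain ⟨x, -, rfl⟩ := mem_image.1 (mem_sdiff.1 (hsub hA)).1
    obtain ⟨y, -, rfl⟩ := mem_image.1 (mem_sdiff.1 (hsub hB)).1
    obtain ⟨hx0, hxt⟩ := (hmem x).1 (hsub hA)
    obtain ⟨hy0, hyt⟩ := (hmem y).1 (hsub hB)
    rcases (sepLine_iff_between hv hx0 hy0 (hinj.ne_iff.1 hAB) hxt.symm hyt.symm).1 hsep with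
      ⟨hxt, hty⟩ | ⟨hyt, htx⟩
    · exact ⟨(x, y), ⟨⟨hx0, hxt⟩, hty⟩, he⟩
    · exact ⟨(y, x), ⟨⟨hy0, hyt⟩, htx⟩, pair_comm (v x) (v y) ▸ he⟩
  · rintro ⟨⟨x, y⟩, ⟨⟨hx0, hxt⟩, hty⟩, rfl⟩
    have hxy : v x ≠ v y := hinj.ne (hxt.trans hty).ne
    refine ⟨⟨insert_subset ((hmem x).2 ⟨hx0, hxt.ne⟩)
      (singleton_subset_iff.2 ((hmem y).2 ⟨ht.trans hty, hty.ne'⟩)),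
      card_pair hxy⟩, v x, mem_insert_self _ _, v y, mem_insert_of_mem (mem_singleton_self _),
      hxy, ?_⟩
    exact (sepLine_iff_of_lt hv hx0 (hxt.trans hty) hxt.ne' hty.ne).2 ⟨hxt, hty⟩

lemma orchard_iff_odd_nsep {C : Finset (ℝ × ℝ)} {P Q : ℝ × ℝ} (hC : Even C.card) :
    Orchard C P Q ↔ Odd (nsep C P Q) := by
  rw [Nat.even_iff] at hC
  rw [Orchard, Int.ModEq, Nat.odd_iff]
  omega

lemma odd_pred_mul_iff {m t : ℕ} (hm : Even m) (ht : 0 < t) (htm : t < m) :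
    Odd ((t - 1) * (m - 1 - t)) ↔ Even t := by
  rw [Nat.even_iff] at hm
  rw [Nat.odd_mul, Nat.odd_iff, Nat.odd_iff, Nat.even_iff]
  omega

theorem even_polygon_alternating_general (m n : ℕ) [NeZero m] (hm : m = 2 * n)
    (s : Fin m → ℝ × ℝ) (hinj : Function.Injective s)
    (hconv : ∀ i j : Fin m, j ≠ i → j ≠ i + 1 →
      0 < det2 (s (i + 1) - s i) (s j - s i)) :
    ∀ a b : Fin m, a ≠ b →
      (Orchard (Finset.image s Finset.univ) (s a) (s b) ↔ (a : ℕ) % 2 = (b : ℕ) % 2) := by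
  intro a b hab
  set t : Fin m := b - a
  have hb : b = a + t := by simp [t]
  have ht : 0 < t := Fin.pos_iff_ne_zero.2 (sub_ne_zero.2 hab.symm)
  have himage : univ.image s = univ.image (s ∘ (a + ·)) := by
    rw [← image_image, image_univ_of_surjective (add_left_surjective a)]
  have hcount : nsep (univ.image s) (s a) (s b) = (t - 1) * (m - 1 - t) := by
    have := nsep_eq_card_mul_card (hinj.comp (add_right_injective a))
      (IsConvexPolygon.ccwSorted_rotate hconv a) ht
    rw [Fin.card_Ioo, Fin.card_Ioi] at this
    simpa [himage, hb] using this
  have hcard : #(univ.image s) = m := by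
    rw [card_image_of_injective _ hinj, card_univ, Fintype.card_fin]
  have hbt : (b : ℕ) % 2 = ((a : ℕ) + t) % 2 := by
    rw [hb, Fin.val_add, Nat.mod_mod_of_dvd _ ⟨n, hm⟩]
  rw [orchard_iff_odd_nsep (by rw [hcard, hm]; exact even_two_mul n), hcount,
    odd_pred_mul_iff ⟨n, by omega⟩ (by simpa using ht) t.is_lt, Nat.even_iff]
  omega

/-- For the vertices `s 0, …, s (2n-1)` of a convex `2n`-gon labeled in
(counterclockwise) cyclic order, the Orchard classes are exactly the
even-indexed and odd-indexed vertices: `s a ∼ s b` iff `a ≡ b (mod 2)`. -/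
theorem even_polygon_alternating (m n : ℕ) [NeZero m] (hm : m = 2 * n)
    (s : Fin m → ℝ × ℝ) (hinj : Function.Injective s)
    (hgen : Generic (Finset.image s Finset.univ))
    (hconv : ∀ i j : Fin m, j ≠ i → j ≠ i + 1 →
      0 < det2 (s (i + 1) - s i) (s j - s i)) :
    ∀ a b : Fin m, a ≠ b →
      (Orchard (Finset.image s Finset.univ) (s a) (s b) ↔ (a : ℕ) % 2 = (b : ℕ) % 2) :=
  even_polygon_alternating_general m n hm s hinj hconv
end
end
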